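/- For all n ≥ 1 and k ≥ 1, the interpolated truncated multiple zeta value at t = 1/2 satisfies ζ^{1/2}_n({1}_k) := ∑_{n ≥ ℓ_1 ≥ ... ≥ ℓ_k ≥ 1} (1/2)^{σ(ℓ)} / (ℓ_1···ℓ_k) = (1/2^k) ∑_{j=1}^{n} C(n+j, j) C(n, j) (-1)^{j-1} / j^k. -/

import Mathlib

/-! Both sides satisfy the recursion `f n (k + 1) = ∑_{m=1}^{n} (f m k + f (m - 1) k) / (2m)`.
For the zeta side, split off the largest entry `ℓ₁ = m`: the remaining tuple either starts with
`m` again (one more equality, weight `1/2`) or has all entries `≤ m - 1`. For the binomial side,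
`A m j = C(m+j, j) C(m, j)` satisfies `j (A m j + A (m-1) j) = m (A m j - A (m-1) j)`, which makes
the sum over `m` telescope. The recursion at `k = 0` only sees `f m 0 + f (m - 1) 0`, which is `2`
on both sides; for the binomial side this is `∑_j (-1)^j C(n+j, j) C(n, j) = (-1)^n`. -/

/-- The set of weakly decreasing `k`-tuples with entries in `{1,...,n}`. -/
def multisetTuples (n k : ℕ) : Finset (Fin k → ℕ) :=
  (Fintype.piFinset fun _ : Fin k => Finset.Icc 1 n).filter
    fun ℓ => ∀ i j : Fin k, i ≤ j → ℓ j ≤ ℓ i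

/-- The number of adjacent equalities `ℓ_j = ℓ_{j+1}` in a tuple. -/
def sigmaEq {k : ℕ} (ℓ : Fin k → ℕ) : ℕ :=
  (Finset.univ.filter fun p : Fin k × Fin k =>
    (p.2 : ℕ) = (p.1 : ℕ) + 1 ∧ ℓ p.1 = ℓ p.2).card

open Finset

def IsHalfRecursive (f : ℕ → ℕ → ℝ) : Prop :=
  ∀ n k, f n (k + 1) = ∑ m ∈ Icc 1 n, (f m k + f (m - 1) k) / (2 * m)

lemma IsHalfRecursive.eq_succ {f g : ℕ → ℕ → ℝ} (hf : IsHalfRecursive f)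
    (hg : IsHalfRecursive g) (h₀ : ∀ m, 1 ≤ m → f m 0 + f (m - 1) 0 = g m 0 + g (m - 1) 0)
    (n k : ℕ) : f n (k + 1) = g n (k + 1) := by
  induction k generalizing n with
  | zero => exact (hf n 0).trans <| (sum_congr rfl fun m hm => by
      rw [h₀ m (mem_Icc.mp hm).1]).trans (hg n 0).symm
  | succ k ih => rw [hf, hg]; exact sum_congr rfl fun m _ => by rw [ih m, ih (m - 1)]

theorem Ring.choose_neg_natCast_add_one (n j : ℕ) :
    Ring.choose (-((n : ℤ) + 1)) j = (-1) ^ j * (n + j).choose j := by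
  rw [Ring.choose_neg, show (n : ℤ) + 1 + j - 1 = ((n + j : ℕ) : ℤ) by push_cast; ring,
    Ring.choose_natCast, Units.smul_def, Int.coe_negOnePow_natCast, smul_eq_mul]

/-- Chu–Vandermonde for `C(-1, n)`, since `C(n+j, j) = (-1)^j C(-n-1, j)`. -/
theorem Int.alternating_sum_range_choose_add_mul_choose (n : ℕ) :
    ∑ j ∈ Finset.range (n + 1), (-1 : ℤ) ^ j * ((n + j).choose j * n.choose j) = (-1) ^ n := by
  have hv := Ring.add_choose_eq (r := -((n : ℤ) + 1)) (s := (n : ℤ)) n (Commute.all _ _)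
  rw [show -((n : ℤ) + 1) + n = -(((0 : ℕ) : ℤ) + 1) by push_cast; ring,
    Nat.sum_antidiagonal_eq_sum_range_succ_mk] at hv
  simp only [Ring.choose_neg_natCast_add_one, Ring.choose_natCast, zero_add, Nat.choose_self,
    Nat.cast_one, mul_one] at hv
  rw [hv]
  refine sum_congr rfl fun j hj => ?_
  rw [Nat.choose_symm (by simpa [Nat.lt_succ_iff] using hj)]
  ring

/-- `(-1)^(n+j) legendreCoeff n j` is the coefficient of `x^j` in the shifted Legendre
polynomial `P̃ₙ`. -/
noncomputable def legendreCoeff (n j : ℕ) : ℝ :=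
  (n + j).choose j * n.choose j

lemma legendreCoeff_eq_zero_of_lt {n j : ℕ} (h : n < j) : legendreCoeff n j = 0 := by
  simp [legendreCoeff, Nat.choose_eq_zero_of_lt h]

lemma sum_Icc_neg_one_pow_mul_legendreCoeff (n : ℕ) :
    ∑ j ∈ Icc 1 n, (-1 : ℝ) ^ (j - 1) * legendreCoeff n j = 1 - (-1) ^ n := by
  have h := congrArg (Int.cast : ℤ → ℝ) (Int.alternating_sum_range_choose_add_mul_choose n)
  push_cast at h
  rw [range_eq_Ico, sum_eq_sum_Ico_succ_bot n.succ_pos, Nat.succ_eq_add_one,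
    Ico_add_one_right_eq_Icc] at h
  simp only [pow_zero, add_zero, Nat.choose_zero_right, Nat.cast_one, mul_one, zero_add] at h
  have hterm : ∀ j ∈ Icc 1 n, (-1 : ℝ) ^ (j - 1) * legendreCoeff n j =
      -((-1) ^ j * ((n + j).choose j * n.choose j)) := by
    intro j hj
    obtain ⟨i, rfl⟩ := Nat.exists_eq_add_of_le' (mem_Icc.mp hj).1
    simp only [legendreCoeff, Nat.add_sub_cancel, pow_succ]
    ring
  rw [sum_congr rfl hterm, sum_neg_distrib]
  linarith

lemma mul_legendreCoeff_succ_add (n j : ℕ) :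
    (j : ℝ) * (legendreCoeff (n + 1) j + legendreCoeff n j) =
      (n + 1) * (legendreCoeff (n + 1) j - legendreCoeff n j) := by
  rcases lt_or_ge (n + 1) j with hj | hj
  · simp [legendreCoeff_eq_zero_of_lt hj, legendreCoeff_eq_zero_of_lt (n.lt_succ_self.trans hj)]
  have h₁ : ((n + j).choose j : ℝ) * (n + j + 1) = (n + j + 1).choose j * (n + 1) := by
    have := Nat.choose_mul_succ_eq (n + j) j
    rw [show n + j + 1 - j = n + 1 by omega] at this
    exact_mod_cast this
  have h₂ : (n.choose j : ℝ) * (n + 1) = (n + 1).choose j * (n + 1 - j) := by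
    have := congrArg (Nat.cast : ℕ → ℝ) (Nat.choose_mul_succ_eq n j)
    push_cast [Nat.cast_sub hj] at this
    exact this
  simp only [legendreCoeff, Nat.add_right_comm n 1 j]
  linear_combination (n.choose j : ℝ) * h₁ + ((n + j + 1).choose j : ℝ) * h₂

noncomputable def binomialZeta (n k : ℕ) : ℝ :=
  1 / 2 ^ k * ∑ j ∈ Icc 1 n, legendreCoeff n j * (-1) ^ (j - 1) / (j : ℝ) ^ k

lemma binomialZeta_eq_sum_Icc {n N : ℕ} (h : n ≤ N) (k : ℕ) :
    binomialZeta n k =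
      1 / 2 ^ k * ∑ j ∈ Icc 1 N, legendreCoeff n j * (-1) ^ (j - 1) / (j : ℝ) ^ k := by
  rw [binomialZeta, sum_subset (Icc_subset_Icc_right h)]
  intro j hj hnj
  simp only [mem_Icc, not_and, not_le] at hj hnj
  rw [legendreCoeff_eq_zero_of_lt (hnj hj.1), zero_mul, zero_div]

lemma binomialZeta_zero_add {m : ℕ} (hm : 1 ≤ m) :
    binomialZeta m 0 + binomialZeta (m - 1) 0 = 2 := by
  obtain ⟨m, rfl⟩ := Nat.exists_eq_add_of_le' hm
  simp only [binomialZeta, pow_zero, div_one, one_mul, mul_comm _ ((-1 : ℝ) ^ _),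
    sum_Icc_neg_one_pow_mul_legendreCoeff, Nat.add_sub_cancel, pow_succ]
  ring

lemma sum_Icc_sub_pred (f : ℕ → ℝ) (n : ℕ) :
    ∑ m ∈ Icc 1 n, (f m - f (m - 1)) = f n - f 0 := by
  induction n with
  | zero => simp
  | succ n ih => rw [sum_Icc_succ_top (by omega), ih, Nat.add_sub_cancel]; ring

lemma isHalfRecursive_binomialZeta : IsHalfRecursive binomialZeta := by
  intro n k
  have hstep : ∀ m ∈ Icc 1 n, (binomialZeta m k + binomialZeta (m - 1) k) / (2 * m) =
      ∑ j ∈ Icc 1 n, (legendreCoeff m j - legendreCoeff (m - 1) j) *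
        ((-1) ^ (j - 1) / (2 ^ (k + 1) * (j : ℝ) ^ (k + 1))) := by
    intro m hm
    obtain ⟨hm1, hmn⟩ := mem_Icc.mp hm
    rw [binomialZeta_eq_sum_Icc hmn, binomialZeta_eq_sum_Icc ((m.sub_le 1).trans hmn),
      ← mul_add, ← sum_add_distrib, mul_sum, sum_div]
    refine sum_congr rfl fun j hj => ?_
    obtain ⟨m, rfl⟩ := Nat.exists_eq_add_of_le' hm1
    have hj : (j : ℝ) ≠ 0 := by have := (mem_Icc.mp hj).1; positivity
    have hkey := mul_legendreCoeff_succ_add m j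
    rw [Nat.add_sub_cancel]
    push_cast
    field_simp
    linear_combination (2 ^ (k + 1) * (j : ℝ) ^ k) * hkey
  rw [sum_congr rfl hstep, sum_comm, binomialZeta, mul_sum]
  refine sum_congr rfl fun j hj => ?_
  rw [← sum_mul, sum_Icc_sub_pred (legendreCoeff · j),
    legendreCoeff_eq_zero_of_lt (mem_Icc.mp hj).1]
  ring

lemma mem_multisetTuples {n k : ℕ} {ℓ : Fin k → ℕ} :
    ℓ ∈ multisetTuples n k ↔ (∀ i, 1 ≤ ℓ i ∧ ℓ i ≤ n) ∧ Antitone ℓ := by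
  simp [multisetTuples, Antitone]

lemma cons_mem_multisetTuples_iff {n k m : ℕ} {t : Fin k → ℕ} :
    (Fin.cons m t : Fin (k + 1) → ℕ) ∈ multisetTuples n (k + 1) ↔
      m ∈ Icc 1 n ∧ t ∈ multisetTuples m k := by
  simp only [mem_multisetTuples, Fin.forall_fin_succ, Fin.cons_zero, Fin.cons_succ, mem_Icc,
    Antitone, Fin.succ_le_succ_iff, Fin.zero_le, Fin.le_zero_iff, Fin.succ_ne_zero,
    true_implies, false_implies, le_refl, true_and, implies_true]
  constructor
  · rintro ⟨⟨hm, ht⟩, htm, hanti⟩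
    exact ⟨hm, fun i => ⟨(ht i).1, htm i⟩, fun i j => hanti i j⟩
  · rintro ⟨hm, ht, hanti⟩
    exact ⟨⟨hm, fun i => ⟨(ht i).1, (ht i).2.trans hm.2⟩⟩, fun i => (ht i).2,
      fun i j => @hanti i j⟩

lemma multisetTuples_zero_right (n : ℕ) : multisetTuples n 0 = {![]} := by
  ext t
  simp [mem_multisetTuples, Subsingleton.elim t ![], Subsingleton.antitone]

lemma sigmaEq_eq_card {k : ℕ} (ℓ : Fin (k + 1) → ℕ) :
    sigmaEq ℓ = #{i : Fin k | ℓ i.castSucc = ℓ i.succ} := by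
  refine (card_nbij (fun i => (i.castSucc, i.succ)) ?_ ?_ ?_).symm
  · intro i hi
    simpa using hi
  · intro a _ b _ h
    exact Fin.castSucc_injective _ (congrArg Prod.fst h)
  · rintro ⟨a, b⟩ h
    simp only [coe_filter, mem_univ, true_and, Set.mem_ofPred_eq] at h
    obtain ⟨hab, h⟩ := h
    have hb : (⟨a, by omega⟩ : Fin k).succ = b := Fin.ext (by simp [hab])
    exact ⟨⟨a, by omega⟩, by simpa [hb] using h, by simp [hb]⟩

lemma sigmaEq_fin_one (ℓ : Fin 1 → ℕ) : sigmaEq ℓ = 0 := by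
  simp [sigmaEq_eq_card]

lemma sigmaEq_cons {k : ℕ} (m : ℕ) (t : Fin (k + 1) → ℕ) :
    sigmaEq (Fin.cons m t : Fin (k + 2) → ℕ) = sigmaEq t + if t 0 = m then 1 else 0 := by
  rw [sigmaEq_eq_card, sigmaEq_eq_card, card_filter, card_filter, Fin.sum_univ_succ, add_comm]
  simp only [← Fin.succ_castSucc, Fin.cons_succ, Fin.castSucc_zero, Fin.cons_zero, eq_comm]

lemma sum_multisetTuples_succ {M : Type*} [AddCommMonoid M] (n k : ℕ)
    (F : (Fin (k + 1) → ℕ) → M) :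
    ∑ ℓ ∈ multisetTuples n (k + 1), F ℓ =
      ∑ m ∈ Icc 1 n, ∑ t ∈ multisetTuples m k, F (Fin.cons m t) := by
  rw [← sum_sigma (Icc 1 n) (multisetTuples · k) fun p => F (Fin.cons p.1 p.2)]
  refine sum_nbij' (fun ℓ => ⟨ℓ 0, Fin.tail ℓ⟩) (fun p => Fin.cons p.1 p.2) ?_ ?_ ?_ ?_ ?_
  · intro ℓ hℓ
    rw [← Fin.cons_self_tail ℓ, cons_mem_multisetTuples_iff] at hℓ
    simpa using hℓ
  · rintro ⟨m, t⟩ h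
    simpa [cons_mem_multisetTuples_iff] using h
  · intro ℓ _
    exact Fin.cons_self_tail ℓ
  · rintro ⟨m, t⟩ _
    simp
  · intro ℓ _
    rw [Fin.cons_self_tail]

lemma filter_ne_head_multisetTuples (m k : ℕ) :
    {t ∈ multisetTuples m (k + 1) | t 0 ≠ m} = multisetTuples (m - 1) (k + 1) := by
  ext t
  simp only [mem_filter, mem_multisetTuples]
  constructor
  · rintro ⟨⟨hb, hanti⟩, hne⟩
    have := (hb 0).2
    exact ⟨fun i => ⟨(hb i).1, (hanti (Fin.zero_le i)).trans (by omega)⟩, hanti⟩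
  · rintro ⟨hb, hanti⟩
    have := hb 0
    exact ⟨⟨fun i => ⟨(hb i).1, (hb i).2.trans (by omega)⟩, hanti⟩, by omega⟩

noncomputable def halfWeight {k : ℕ} (ℓ : Fin k → ℕ) : ℝ :=
  (1 / 2) ^ sigmaEq ℓ * ∏ i, 1 / (ℓ i : ℝ)

/-- The interpolated truncated multiple zeta value `ζ^{1/2}_n({1}_k)`. -/
noncomputable def zetaHalf (n k : ℕ) : ℝ :=
  ∑ ℓ ∈ multisetTuples n k, halfWeight ℓ

lemma zetaHalf_zero_right (n : ℕ) : zetaHalf n 0 = 1 := by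
  simp [zetaHalf, multisetTuples_zero_right, halfWeight, sigmaEq]

lemma halfWeight_cons {k : ℕ} (m : ℕ) (t : Fin (k + 1) → ℕ) :
    halfWeight (Fin.cons m t : Fin (k + 2) → ℕ) =
      (if t 0 = m then 1 / 2 else 1) * halfWeight t / m := by
  simp only [halfWeight, sigmaEq_cons, pow_add, Fin.prod_univ_succ, Fin.cons_zero, Fin.cons_succ]
  split_ifs <;> ring

lemma sum_halfWeight_cons (m k : ℕ) :
    ∑ t ∈ multisetTuples m k, halfWeight (Fin.cons m t : Fin (k + 1) → ℕ) =
      (zetaHalf m k + zetaHalf (m - 1) k) / (2 * m) := by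
  cases k with
  | zero =>
    simp only [multisetTuples_zero_right, sum_singleton, halfWeight, sigmaEq_fin_one,
      zetaHalf_zero_right, Fin.prod_univ_succ, Fin.prod_univ_zero, Fin.cons_zero]
    ring
  | succ k =>
    have hsplit : ∀ t : Fin (k + 1) → ℕ, (if t 0 = m then 1 / 2 else 1) * halfWeight t =
        (halfWeight t + if t 0 ≠ m then halfWeight t else 0) / 2 := by
      intro t
      by_cases h : t 0 = m
      · rw [if_pos h, if_neg (not_not.mpr h)]; ring
      · rw [if_neg h, if_pos h]; ring
    simp only [halfWeight_cons, ← sum_div, hsplit, add_div, sum_add_distrib]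
    rw [← sum_filter, filter_ne_head_multisetTuples, zetaHalf, zetaHalf, div_div, div_div]

lemma isHalfRecursive_zetaHalf : IsHalfRecursive zetaHalf := by
  intro n k
  rw [zetaHalf, sum_multisetTuples_succ]
  exact sum_congr rfl fun m _ => sum_halfWeight_cons m k

theorem zeta_half_binomial_sum_general (n k : ℕ) (hk : 1 ≤ k) :
    (∑ ℓ ∈ multisetTuples n k, (1 / 2 : ℝ) ^ sigmaEq ℓ * ∏ i, (1 : ℝ) / (ℓ i : ℝ)) =
      (1 / 2 ^ k : ℝ) *
        ∑ j ∈ Finset.Icc 1 n,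
          ((n + j).choose j : ℝ) * (n.choose j : ℝ) * (-1 : ℝ) ^ (j - 1) / (j : ℝ) ^ k := by
  obtain ⟨k, rfl⟩ := Nat.exists_eq_add_of_le' hk
  refine isHalfRecursive_zetaHalf.eq_succ isHalfRecursive_binomialZeta (fun m hm => ?_) n k
  rw [zetaHalf_zero_right, zetaHalf_zero_right, binomialZeta_zero_add hm]
  norm_num

theorem zeta_half_binomial_sum (n k : ℕ) (hn : 1 ≤ n) (hk : 1 ≤ k) :
    (∑ ℓ ∈ multisetTuples n k, (1 / 2 : ℝ) ^ sigmaEq ℓ * ∏ i, (1 : ℝ) / (ℓ i : ℝ)) =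
      (1 / 2 ^ k : ℝ) *
        ∑ j ∈ Finset.Icc 1 n,
          ((n + j).choose j : ℝ) * (n.choose j : ℝ) * (-1 : ℝ) ^ (j - 1) / (j : ℝ) ^ k :=
  zeta_half_binomial_sum_general n k hk
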